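/- arXiv:1712.05439 — 3 statements merged into one kernel-verified Lean document; each statement's English description precedes it below -/
import Mathlib

section
/- The map F_ε is Lipschitz continuous on ℝ^d with Lipschitz constant 1/ε. -/
/-!
Away from the origin `F_ε(x) = (g(|x|) / |x|) x`, where the radial profile `g` is continuous,
piecewise affine with slopes `1/ε`, `1/(2-ε)`, `1`, and `g(0) = 0`; so `g` is `1/ε`-Lipschitz,
and `|g(r)/r| ≤ 1/ε`. For scalars `a, b` the identity
`|a x - b y|² = (a|x| - b|y|)² + a b (|x - y|² - (|x| - |y|)²)` then bounds
`|F_ε x - F_ε y|²` by `(1/ε)² |x - y|²`, since the bracket is nonnegative.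
-/

/-- The Kohn regularised cloaking map `F_ε : ℝ^d → ℝ^d`. -/
noncomputable def kohnMap (d : ℕ) (ε : ℝ) (x : EuclideanSpace ℝ (Fin d)) :
    EuclideanSpace ℝ (Fin d) :=
  if 2 ≤ ‖x‖ then x
  else if ε ≤ ‖x‖ then ((2 - 2 * ε) / (2 - ε) + ‖x‖ / (2 - ε)) • (‖x‖⁻¹ • x)
  else ε⁻¹ • x

open NNReal Set

section Radial

variable {E : Type*} [NormedAddCommGroup E] [InnerProductSpace ℝ E]

theorem norm_smul_sub_smul_sq (a b : ℝ) (x y : E) :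
    ‖a • x - b • y‖ ^ 2 = (a * ‖x‖ - b * ‖y‖) ^ 2 + a * b * (‖x - y‖ ^ 2 - (‖x‖ - ‖y‖) ^ 2) := by
  rw [norm_sub_sq_real, norm_sub_sq_real, real_inner_smul_left, real_inner_smul_right,
    norm_smul, norm_smul, Real.norm_eq_abs, Real.norm_eq_abs, mul_pow, mul_pow, sq_abs, sq_abs]
  ring

theorem norm_smul_sub_smul_le_of_abs_le {a b L : ℝ} {x y : E} (ha : |a| ≤ L) (hb : |b| ≤ L)
    (hnorm : |a * ‖x‖ - b * ‖y‖| ≤ L * |‖x‖ - ‖y‖|) : ‖a • x - b • y‖ ≤ L * ‖x - y‖ := by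
  have hL : 0 ≤ L := (abs_nonneg a).trans ha
  have hab : a * b ≤ L ^ 2 := by
    rw [sq]; exact (le_abs_self _).trans (abs_mul a b ▸ mul_le_mul ha hb (abs_nonneg b) hL)
  have hgap : 0 ≤ ‖x - y‖ ^ 2 - (‖x‖ - ‖y‖) ^ 2 := by
    rw [sub_nonneg, ← sq_abs (‖x‖ - ‖y‖)]
    exact pow_le_pow_left₀ (abs_nonneg _) (abs_norm_sub_norm_le x y) 2
  have hrad : (a * ‖x‖ - b * ‖y‖) ^ 2 ≤ L ^ 2 * (‖x‖ - ‖y‖) ^ 2 := by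
    rw [← sq_abs, ← sq_abs (‖x‖ - ‖y‖), ← mul_pow]
    exact pow_le_pow_left₀ (abs_nonneg _) hnorm 2
  refine (pow_le_pow_iff_left₀ (norm_nonneg _) (by positivity) two_ne_zero).1 ?_
  rw [norm_smul_sub_smul_sq]
  nlinarith [mul_le_mul_of_nonneg_right hab hgap]

theorem LipschitzOnWith.lipschitzWith_radial {g : ℝ → ℝ} {L : ℝ≥0} (hg0 : g 0 = 0)
    (hg : LipschitzOnWith L g (Ici 0)) : LipschitzWith L fun x : E ↦ (g ‖x‖ / ‖x‖) • x := by
  have hdist {r s : ℝ} (hr : 0 ≤ r) (hs : 0 ≤ s) : |g r - g s| ≤ L * |r - s| := by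
    simpa [Real.dist_eq] using hg.dist_le_mul r hr s hs
  have hscale (r : ℝ) (hr : 0 ≤ r) : |g r / r| ≤ L := by
    rcases hr.eq_or_lt with rfl | hr
    · simp
    · rw [abs_div, abs_of_pos hr, div_le_iff₀ hr]
      simpa [hg0, abs_of_pos hr] using hdist hr.le le_rfl
  have hprofile (r : ℝ) : g r / r * r = g r := by
    rcases eq_or_ne r 0 with rfl | hr
    · simp [hg0]
    · exact div_mul_cancel₀ _ hr
  refine LipschitzWith.of_dist_le_mul fun x y ↦ ?_
  rw [dist_eq_norm, dist_eq_norm]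
  refine norm_smul_sub_smul_le_of_abs_le (hscale _ (norm_nonneg x)) (hscale _ (norm_nonneg y)) ?_
  rw [hprofile, hprofile]
  exact hdist (norm_nonneg x) (norm_nonneg y)

end Radial

theorem lipschitzWith_add_div (b c : ℝ) : LipschitzWith ‖c⁻¹‖₊ fun r : ℝ ↦ (b + r) / c :=
  LipschitzWith.of_dist_le_mul fun r s ↦ by
    simp [Real.dist_eq, div_eq_inv_mul, ← mul_sub, abs_mul]

/-- The profile `|x| ↦ |F_ε(x)|`, written as a min/max of its three affine pieces. -/
noncomputable def kohnProfile (ε r : ℝ) : ℝ :=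
  min (r / ε) (max ((2 - 2 * ε + r) / (2 - ε)) r)

section Kohn

variable {ε : ℝ}

theorem lipschitzWith_kohnProfile (hε0 : 0 < ε) (hε1 : ε < 1) :
    LipschitzWith (1 / ε).toNNReal (kohnProfile ε) := by
  have hε2 : 0 < 2 - ε := by linarith
  have hK : max ‖ε⁻¹‖₊ (max ‖(2 - ε)⁻¹‖₊ 1) ≤ (1 / ε).toNNReal := by
    simp only [max_le_iff, ← NNReal.coe_le_coe, coe_nnnorm, Real.norm_eq_abs, NNReal.coe_one,
      one_div, Real.coe_toNNReal _ (inv_pos.2 hε0).le, abs_inv, abs_of_pos hε0, abs_of_pos hε2]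
    exact ⟨le_rfl, (inv_le_inv₀ hε2 hε0).2 (by linarith), (one_le_inv₀ hε0).2 hε1.le⟩
  have hdiv : LipschitzWith ‖ε⁻¹‖₊ fun r : ℝ ↦ r / ε := by simpa using lipschitzWith_add_div 0 ε
  exact (hdiv.min ((lipschitzWith_add_div (2 - 2 * ε) (2 - ε)).max LipschitzWith.id)).weaken hK

theorem kohnProfile_of_two_le (hε0 : 0 < ε) (hε1 : ε < 1) {r : ℝ} (hr : 2 ≤ r) :
    kohnProfile ε r = r := by
  have hε2 : 0 < 2 - ε := by linarith
  rw [kohnProfile, max_eq_right, min_eq_right]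
  · exact le_div_self (by linarith) hε0 hε1.le
  · rw [div_le_iff₀ hε2]; nlinarith

theorem kohnProfile_of_le_of_le (hε0 : 0 < ε) (hε1 : ε < 1) {r : ℝ} (hεr : ε ≤ r) (hr : r ≤ 2) :
    kohnProfile ε r = (2 - 2 * ε + r) / (2 - ε) := by
  have hε2 : 0 < 2 - ε := by linarith
  rw [kohnProfile, max_eq_left, min_eq_right]
  · rw [div_le_div_iff₀ hε2 hε0]; nlinarith
  · rw [le_div_iff₀ hε2]; nlinarith

theorem kohnProfile_of_le (hε0 : 0 < ε) (hε1 : ε < 1) {r : ℝ} (hr : r ≤ ε) :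
    kohnProfile ε r = r / ε := by
  have hε2 : 0 < 2 - ε := by linarith
  rw [kohnProfile, min_eq_left]
  refine le_max_of_le_left ?_
  rw [div_le_div_iff₀ hε0 hε2]; nlinarith

theorem kohnMap_eq_smul (d : ℕ) (hε0 : 0 < ε) (hε1 : ε < 1) (x : EuclideanSpace ℝ (Fin d)) :
    kohnMap d ε x = (kohnProfile ε ‖x‖ / ‖x‖) • x := by
  rcases eq_or_ne x 0 with rfl | hx0
  · simp [kohnMap]
  have hx : ‖x‖ ≠ 0 := norm_ne_zero_iff.2 hx0
  unfold kohnMap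
  split_ifs with hout hmid
  · rw [kohnProfile_of_two_le hε0 hε1 hout, div_self hx, one_smul]
  · rw [kohnProfile_of_le_of_le hε0 hε1 hmid (not_le.1 hout).le, smul_smul]
    congr 1
    ring
  · rw [kohnProfile_of_le hε0 hε1 (not_le.1 hmid).le, div_div_cancel_left' hx]

end Kohn

theorem kohnMap_lipschitz_general (d : ℕ) (ε : ℝ) (hε0 : 0 < ε) (hε1 : ε < 1) :
    LipschitzWith (Real.toNNReal (1 / ε)) (kohnMap d ε) := by
  rw [show kohnMap d ε = fun x ↦ (kohnProfile ε ‖x‖ / ‖x‖) • x from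
    funext (kohnMap_eq_smul d hε0 hε1)]
  exact (lipschitzWith_kohnProfile hε0 hε1).lipschitzOnWith.lipschitzWith_radial
    (by simp [kohnProfile])

/-- `F_ε` is Lipschitz continuous on `ℝ^d` with Lipschitz constant `1/ε`. -/
theorem kohnMap_lipschitz (d : ℕ) (hd : 2 ≤ d) (ε : ℝ) (hε0 : 0 < ε) (hε1 : ε < 1) :
    LipschitzWith (Real.toNNReal (1 / ε)) (kohnMap d ε) :=
  kohnMap_lipschitz_general d ε hε0 hε1
end

section
/- For every x ∈ ℝ^d with ε < |x| < 2, the map F_ε is (Fréchet) differentiable at x and the determinant of its derivative satisfies det(DF_ε(x)) = (1/(2-ε)) · ((2-2ε+|x|)/((2-ε)|x|))^{d-1}. In particular det(DF_ε(x)) ≥ 1/(2-ε) > 0 on this annulus. -/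
/-!
On the annulus `ε < |x| < 2` the map is radial, `F_ε(y) = g(|y|) · y/|y|` with
`g(r) = (2 - 2ε + r)/(2 - ε)`. The derivative of a radial map at `x` is multiplication by
`g'(r)` along `x` and by `g(r)/r` on `x^⊥` (`r = |x|`), so its determinant is
`g'(r) (g(r)/r)^(d-1)` by the matrix determinant lemma. Here `g' = 1/(2-ε)`, and
`g(r)/r ≥ 1` amounts to `(1 - ε)(2 - r) ≥ 0`.
-/

open Filter Topology Module

theorem LinearMap.det_id_add_smulRight {R M : Type*} [CommRing R] [AddCommGroup M] [Module R M]
    [Module.Free R M] [Module.Finite R M] (f : M →ₗ[R] R) (v : M) :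
    LinearMap.det (LinearMap.id + f.smulRight v) = 1 + f v := by
  let b := Module.Free.chooseBasis R M
  have hmat : LinearMap.toMatrix b b (LinearMap.id + f.smulRight v) =
      1 + Matrix.vecMulVec (b.repr v) (fun i => f (b i)) := by
    ext i j
    simp [LinearMap.toMatrix_apply, Matrix.one_apply, Matrix.vecMulVec_apply, Finsupp.single_apply,
      eq_comm, mul_comm]
  rw [← LinearMap.det_toMatrix b, hmat, Matrix.vecMulVec_eq Unit,
    Matrix.det_one_add_replicateCol_mul_replicateRow]
  conv_rhs => rw [← b.sum_repr v, map_sum]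
  simp [dotProduct, mul_comm]

theorem LinearMap.det_smul_id_add_smulRight {K M : Type*} [Field K] [AddCommGroup M] [Module K M]
    [FiniteDimensional K M] [Nontrivial M] (f : M →ₗ[K] K) (v : M) {a : K} (ha : a ≠ 0) :
    LinearMap.det (a • LinearMap.id + f.smulRight v) = a ^ (finrank K M - 1) * (a + f v) := by
  have hsplit : a • LinearMap.id + f.smulRight v = a • (LinearMap.id + (a⁻¹ • f).smulRight v) := by
    ext w; simp [smul_smul, ha]
  have hn : finrank K M = finrank K M - 1 + 1 := (Nat.sub_add_cancel finrank_pos).symm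
  rw [hsplit, LinearMap.det_smul, LinearMap.det_id_add_smulRight, hn, pow_succ]
  simp only [Nat.add_sub_cancel, LinearMap.smul_apply, smul_eq_mul]
  field_simp

section Radial

variable {E : Type*} [NormedAddCommGroup E] [InnerProductSpace ℝ E] {x : E}

theorem hasFDerivAt_norm_of_ne_zero (hx : x ≠ 0) :
    HasFDerivAt (‖·‖) (‖x‖⁻¹ • innerSL ℝ x) x := by
  have h := (hasStrictFDerivAt_norm_sq x).hasFDerivAt.sqrt (by positivity : ‖x‖ ^ 2 ≠ 0)
  simp only [Real.sqrt_sq (norm_nonneg _)] at h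
  refine h.congr_fderiv ?_
  ext v
  simp only [smul_apply, coe_innerSL_apply, smul_eq_mul, one_div, mul_inv_rev,
    nsmul_eq_mul, Nat.cast_ofNat]
  field_simp

/-- The derivative at `x` of a radial map `y ↦ g ‖y‖ • (y / ‖y‖)` with `g ‖x‖ = a`, `g' ‖x‖ = b`:
multiplication by `a / ‖x‖` on `x^⊥` and by `b` along `x`. -/
noncomputable def radialFDeriv (x : E) (a b : ℝ) : E →L[ℝ] E :=
  (a / ‖x‖) • ContinuousLinearMap.id ℝ E + ((b - a / ‖x‖) / ‖x‖ ^ 2) • (innerSL ℝ x).smulRight x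

theorem HasDerivAt.hasFDerivAt_radial {g : ℝ → ℝ} {g' : ℝ} (hg : HasDerivAt g g' ‖x‖)
    (hx : x ≠ 0) :
    HasFDerivAt (fun y : E => g ‖y‖ • (‖y‖⁻¹ • y)) (radialFDeriv x (g ‖x‖) g') x := by
  have hnorm := hasFDerivAt_norm_of_ne_zero hx
  have hr : ‖x‖ ≠ 0 := norm_ne_zero_iff.2 hx
  have h := (hg.comp_hasFDerivAt x hnorm).smul
    (((hasDerivAt_inv hr).comp_hasFDerivAt x hnorm).smul (hasFDerivAt_id x))
  refine h.congr_fderiv ?_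
  ext v
  simp only [radialFDeriv, Function.comp_apply, id_eq, smul_add, Pi.smul_apply',
    add_apply, smul_apply, ContinuousLinearMap.id_apply,
    ContinuousLinearMap.smulRight_apply, coe_innerSL_apply, smul_eq_mul]
  match_scalars
  · field_simp
  · field_simp
    ring

theorem det_radialFDeriv [FiniteDimensional ℝ E] (hx : x ≠ 0) {a : ℝ} (ha : a ≠ 0) (b : ℝ) :
    LinearMap.det (radialFDeriv x a b : E →ₗ[ℝ] E) = b * (a / ‖x‖) ^ (finrank ℝ E - 1) := by
  have : Nontrivial E := nontrivial_of_ne x 0 hx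
  have hr : ‖x‖ ≠ 0 := norm_ne_zero_iff.2 hx
  set c := (b - a / ‖x‖) / ‖x‖ ^ 2
  have hlin : (radialFDeriv x a b : E →ₗ[ℝ] E) =
      (a / ‖x‖) • LinearMap.id + ((c • innerSL ℝ x : E →L[ℝ] ℝ) : E →ₗ[ℝ] ℝ).smulRight x := by
    ext v; simp [radialFDeriv, c, smul_smul]
  rw [hlin, LinearMap.det_smul_id_add_smulRight _ _ (div_ne_zero ha hr)]
  simp only [ContinuousLinearMap.toLinearMap_smul, ContinuousLinearMap.toLinearMap_innerSL_apply,
    LinearMap.smul_apply, innerₛₗ_apply_apply, inner_self_eq_norm_sq_to_K, Real.ringHom_apply,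
    smul_eq_mul, c]
  field_simp
  ring

end Radial

theorem kohnMap_eventuallyEq_radial {d : ℕ} {ε : ℝ} {x : EuclideanSpace ℝ (Fin d)}
    (hx1 : ε < ‖x‖) (hx2 : ‖x‖ < 2) :
    kohnMap d ε =ᶠ[𝓝 x] fun y => ((2 - 2 * ε) / (2 - ε) + ‖y‖ / (2 - ε)) • (‖y‖⁻¹ • y) := by
  filter_upwards [(continuous_norm.tendsto x).eventually_const_lt hx1,
    (continuous_norm.tendsto x).eventually_lt_const hx2] with y hy1 hy2
  rw [kohnMap, if_neg hy2.not_ge, if_pos hy1.le]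

theorem kohnMap_fderiv_det_general (d : ℕ) (ε : ℝ) (hε0 : 0 < ε) (hε1 : ε < 1)
    (x : EuclideanSpace ℝ (Fin d)) (hx1 : ε < ‖x‖) (hx2 : ‖x‖ < 2) :
    DifferentiableAt ℝ (kohnMap d ε) x ∧
    LinearMap.det (fderiv ℝ (kohnMap d ε) x : EuclideanSpace ℝ (Fin d) →ₗ[ℝ] EuclideanSpace ℝ (Fin d)) =
      (1 / (2 - ε)) * ((2 - 2 * ε + ‖x‖) / ((2 - ε) * ‖x‖)) ^ (d - 1) ∧
    1 / (2 - ε) ≤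
      LinearMap.det (fderiv ℝ (kohnMap d ε) x : EuclideanSpace ℝ (Fin d) →ₗ[ℝ] EuclideanSpace ℝ (Fin d)) ∧
    0 < 1 / (2 - ε) := by
  have hr : 0 < ‖x‖ := hε0.trans hx1
  have hx0 : x ≠ 0 := norm_pos_iff.1 hr
  have h2ε : 0 < 2 - ε := by linarith
  set g : ℝ → ℝ := fun r => (2 - 2 * ε) / (2 - ε) + r / (2 - ε)
  have hg : HasDerivAt g (1 / (2 - ε)) ‖x‖ := ((hasDerivAt_id _).div_const _).const_add _
  have hgx : g ‖x‖ = (2 - 2 * ε + ‖x‖) / (2 - ε) := by simp only [g]; ring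
  have hF := (hg.hasFDerivAt_radial hx0).congr_of_eventuallyEq (kohnMap_eventuallyEq_radial hx1 hx2)
  have hdet : LinearMap.det (fderiv ℝ (kohnMap d ε) x : EuclideanSpace ℝ (Fin d) →ₗ[ℝ] _) =
      (1 / (2 - ε)) * ((2 - 2 * ε + ‖x‖) / ((2 - ε) * ‖x‖)) ^ (d - 1) := by
    rw [hF.fderiv, det_radialFDeriv hx0 (by rw [hgx]; exact div_ne_zero (by linarith) h2ε.ne'), finrank_euclideanSpace_fin,
      hgx, div_div]
  have hgrowth : 1 ≤ (2 - 2 * ε + ‖x‖) / ((2 - ε) * ‖x‖) := by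
    rw [one_le_div (mul_pos h2ε hr)]
    nlinarith
  have hjac : 0 < 1 / (2 - ε) := one_div_pos.2 h2ε
  refine ⟨hF.differentiableAt, hdet, ?_, hjac⟩
  rw [hdet]
  exact le_mul_of_one_le_right hjac.le (one_le_pow₀ hgrowth)

/-- For `ε < |x| < 2`, `F_ε` is Fréchet differentiable at `x` and the determinant of
its derivative equals `(1/(2-ε)) · ((2-2ε+|x|)/((2-ε)|x|))^(d-1)`; in particular it is
bounded below by `1/(2-ε) > 0`. -/
theorem kohnMap_fderiv_det (d : ℕ) (hd : 2 ≤ d) (ε : ℝ) (hε0 : 0 < ε) (hε1 : ε < 1)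
    (x : EuclideanSpace ℝ (Fin d)) (hx1 : ε < ‖x‖) (hx2 : ‖x‖ < 2) :
    DifferentiableAt ℝ (kohnMap d ε) x ∧
    LinearMap.det (fderiv ℝ (kohnMap d ε) x : EuclideanSpace ℝ (Fin d) →ₗ[ℝ] EuclideanSpace ℝ (Fin d)) =
      (1 / (2 - ε)) * ((2 - 2 * ε + ‖x‖) / ((2 - ε) * ‖x‖)) ^ (d - 1) ∧
    1 / (2 - ε) ≤
      LinearMap.det (fderiv ℝ (kohnMap d ε) x : EuclideanSpace ℝ (Fin d) →ₗ[ℝ] EuclideanSpace ℝ (Fin d)) ∧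
    0 < 1 / (2 - ε) :=
  kohnMap_fderiv_det_general d ε hε0 hε1 x hx1 hx2
end

section
/- Let F : ℝ^d → ℝ^d be a C² diffeomorphism with det DF(x) > 0 for every x, let A : ℝ^d → ℝ^{d×d} be a C¹ matrix field, and let u : ℝ^d → ℝ be C². Define v = u ∘ F⁻¹ and the push-forward conductivity B(y) = (DF(x) · A(x) · DF(x)ᵀ)/det DF(x) evaluated at x = F⁻¹(y). Then for every y ∈ ℝ^d: Σ_i ∂_i( Σ_j B_{ij} ∂_j v )(y) = (1/det DF(F⁻¹(y))) · Σ_i ∂_i( Σ_j A_{ij} ∂_j u )(F⁻¹(y)); that is, ∇·(F*A ∇(u∘F⁻¹)) = (∇·(A∇u)) ∘ F⁻¹ / (det DF ∘ F⁻¹). -/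
open Matrix

/-- Partial derivative in the `i`-th coordinate direction of `ℝ^d`. -/
noncomputable def pd (d : ℕ) (i : Fin d) (f : (Fin d → ℝ) → ℝ) (x : Fin d → ℝ) : ℝ :=
  fderiv ℝ f x (Pi.single i 1)

/-- Divergence-form operator `∇·(M∇g) = Σ_i ∂_i(Σ_j M_{ij} ∂_j g)`. -/
noncomputable def divForm (d : ℕ) (M : (Fin d → ℝ) → Matrix (Fin d) (Fin d) ℝ)
    (g : (Fin d → ℝ) → ℝ) (x : Fin d → ℝ) : ℝ :=
  ∑ i, pd d i (fun z => ∑ j, M z i j * pd d j g z) x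

/-- Jacobian matrix of a map `F : ℝ^d → ℝ^d` at `x`. -/
noncomputable def jacMat (d : ℕ) (F : (Fin d → ℝ) → (Fin d → ℝ)) (x : Fin d → ℝ) :
    Matrix (Fin d) (Fin d) ℝ :=
  LinearMap.toMatrix' ((fderiv ℝ F x : (Fin d → ℝ) →L[ℝ] (Fin d → ℝ)) :
    (Fin d → ℝ) →ₗ[ℝ] (Fin d → ℝ))


/-!
Write `Q = DG` and `P = DF ∘ G`, so that `P Q = Q P = 1`. By the chain rule
`∇(u ∘ G) = Qᵀ (∇u ∘ G)`, hence
`B ∇(u ∘ G) = (det P)⁻¹ P A Pᵀ Qᵀ (∇u ∘ G) = adj(Q) (W ∘ G)` with `W = A∇u`,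
because `adj Q = det Q • P` and `det Q = (det P)⁻¹`. The columns of the cofactor matrix `adj(DG)`
are divergence free (Piola's identity, a consequence of the symmetry of second derivatives), so
`div(adj(DG) (W ∘ G)) = ∑ₖ ∑ᵢ adj(Q)ᵢₖ ∂ᵢ(Wₖ ∘ G) = det Q · (div W) ∘ G`,
using `Q adj(Q) = det Q • 1`.
-/

section MatrixAlgebra

variable {ι : Type*} [Fintype ι]

theorem sum_sum_mul_eq_zero_of_symm_of_antisymm {R : Type*} [CommRing R] [IsAddTorsionFree R]
    {S T : ι → ι → R} (hS : ∀ i j, S j i = S i j) (hT : ∀ i j, T j i = -T i j) :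
    ∑ i, ∑ j, S i j * T i j = 0 := by
  refine self_eq_neg.mp ?_
  calc ∑ i, ∑ j, S i j * T i j = ∑ j, ∑ i, S i j * T i j := Finset.sum_comm
  _ = ∑ j, ∑ i, -(S j i * T j i) :=
        Finset.sum_congr rfl fun j _ => Finset.sum_congr rfl fun i _ => by
          rw [hS j i, hT j i, mul_neg]
  _ = -∑ i, ∑ j, S i j * T i j := by simp only [Finset.sum_neg_distrib]

variable [DecidableEq ι] {R : Type*} [CommRing R]

theorem det_updateRow_updateRow_swap (Q : Matrix ι ι R) {k l : ι} (hlk : l ≠ k) (a b : ι → R) :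
    ((Q.updateRow k a).updateRow l b).det = -((Q.updateRow k b).updateRow l a).det := by
  have hswap : (Q.updateRow k a).updateRow l b ∘ Equiv.swap l k
      = (Q.updateRow k b).updateRow l a := by
    funext m
    change (Q.updateRow k a).updateRow l b (Equiv.swap l k m) = _
    rcases eq_or_ne m l with rfl | hml
    · simp [Matrix.updateRow_ne hlk.symm]
    rcases eq_or_ne m k with rfl | hmk
    · simp [Matrix.updateRow_ne hml]
    · simp [Equiv.swap_apply_of_ne_of_ne hml hmk, Matrix.updateRow_ne hml,
        Matrix.updateRow_ne hmk]
  have := (Matrix.detRowAlternating : (ι → R) [⋀^ι]→ₗ[R] R).map_swap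
    ((Q.updateRow k a).updateRow l b) hlk
  rw [hswap] at this
  exact neg_eq_iff_eq_neg.mp this.symm

theorem det_updateRow_sum_smul (Q : Matrix ι ι R) (l : ι) {α : Type*} (s : Finset α)
    (c : α → R) (v : α → ι → R) :
    (Q.updateRow l (∑ j ∈ s, c j • v j)).det = ∑ j ∈ s, c j * (Q.updateRow l (v j)).det :=
  ((Matrix.detRowAlternating : (ι → R) [⋀^ι]→ₗ[R] R).map_update_sum s l _ Q).trans <|
    Finset.sum_congr rfl fun j _ => Matrix.det_updateRow_smul Q l (c j) (v j)

theorem adjugate_eq_det_smul_of_mul_eq_one {P Q : Matrix ι ι R} (h : P * Q = 1) :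
    Q.adjugate = Q.det • P := by
  calc Q.adjugate = P * Q * Q.adjugate := by rw [h, Matrix.one_mul]
  _ = Q.det • P := by rw [Matrix.mul_assoc, Matrix.mul_adjugate, Matrix.mul_smul, Matrix.mul_one]

theorem det_eq_inv_det_of_mul_eq_one {K : Type*} [Field K] {P Q : Matrix ι ι K} (h : Q * P = 1) :
    Q.det = P.det⁻¹ :=
  eq_inv_of_mul_eq_one_left <| by rw [← Matrix.det_mul, h, Matrix.det_one]

theorem inv_det_smul_mul_mul_transpose_mul_transpose {K : Type*} [Field K] {P Q : Matrix ι ι K}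
    (hPQ : P * Q = 1) (hQP : Q * P = 1) (A : Matrix ι ι K) :
    (P.det⁻¹ • (P * A * Pᵀ)) * Qᵀ = Q.adjugate * A := by
  rw [adjugate_eq_det_smul_of_mul_eq_one hPQ, det_eq_inv_det_of_mul_eq_one hQP, Matrix.smul_mul,
    Matrix.smul_mul, Matrix.mul_assoc, ← Matrix.transpose_mul, hQP, Matrix.transpose_one,
    Matrix.mul_one]

end MatrixAlgebra

section DetDeriv

variable {E : Type*} [NormedAddCommGroup E] [NormedSpace ℝ E] {ι : Type*} [Fintype ι]
  [DecidableEq ι]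

variable (ι) in
noncomputable def detContinuousMultilinearMap :
    ContinuousMultilinearMap ℝ (fun _ : ι => ι → ℝ) ℝ :=
  { (Matrix.detRowAlternating : (ι → ℝ) [⋀^ι]→ₗ[ℝ] ℝ).toMultilinearMap with
    cont := continuous_id.matrix_det }

theorem hasFDerivAt_det {M : E → Matrix ι ι ℝ} {x : E}
    (h : ∀ l j, DifferentiableAt ℝ (fun z => M z l j) x) :
    HasFDerivAt (fun z => (M z).det)
      (((detContinuousMultilinearMap ι).linearDeriv (M x)).comp
        (ContinuousLinearMap.pi fun l =>
          ContinuousLinearMap.pi fun j => fderiv ℝ (fun z => M z l j) x)) x :=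
  (detContinuousMultilinearMap ι).hasFDerivAt (M x) |>.comp x <|
    hasFDerivAt_pi.2 fun l => hasFDerivAt_pi.2 fun j => (h l j).hasFDerivAt

theorem fderiv_det_apply {M : E → Matrix ι ι ℝ} {x : E}
    (h : ∀ l j, DifferentiableAt ℝ (fun z => M z l j) x) (v : E) :
    fderiv ℝ (fun z => (M z).det) x v
      = ∑ l, ((M x).updateRow l fun j => fderiv ℝ (fun z => M z l j) x v).det := by
  rw [(hasFDerivAt_det h).fderiv]
  exact ContinuousMultilinearMap.linearDeriv_apply _ _ _

omit [Fintype ι] in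
theorem differentiableAt_updateRow_apply {M : E → Matrix ι ι ℝ} {x : E}
    (h : ∀ l j, DifferentiableAt ℝ (fun z => M z l j) x) (k : ι) (c : ι → ℝ) (l j : ι) :
    DifferentiableAt ℝ (fun z => (M z).updateRow k c l j) x := by
  rcases eq_or_ne l k with rfl | hlk
  · simp
  · simpa [Matrix.updateRow_ne hlk] using h l j

theorem differentiableAt_adjugate_apply {M : E → Matrix ι ι ℝ} {x : E}
    (h : ∀ l j, DifferentiableAt ℝ (fun z => M z l j) x) (i k : ι) :
    DifferentiableAt ℝ (fun z => (M z).adjugate i k) x := by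
  simp only [Matrix.adjugate_apply]
  exact (hasFDerivAt_det (differentiableAt_updateRow_apply h k _)).differentiableAt

end DetDeriv

section Calculus

variable {d : ℕ}

noncomputable def grad (d : ℕ) (g : (Fin d → ℝ) → ℝ) (x : Fin d → ℝ) : Fin d → ℝ :=
  fun j => pd d j g x

noncomputable def divergence (d : ℕ) (V : (Fin d → ℝ) → Fin d → ℝ) (x : Fin d → ℝ) : ℝ :=
  ∑ i, pd d i (fun z => V z i) x

theorem divForm_eq_divergence (M : (Fin d → ℝ) → Matrix (Fin d) (Fin d) ℝ)
    (g : (Fin d → ℝ) → ℝ) (x : Fin d → ℝ) :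
    divForm d M g x = divergence d (fun z => M z *ᵥ grad d g z) x :=
  rfl

theorem pd_sum {ι : Type*} (s : Finset ι) {f : ι → (Fin d → ℝ) → ℝ} {x : Fin d → ℝ}
    (i : Fin d) (h : ∀ k ∈ s, DifferentiableAt ℝ (f k) x) :
    pd d i (fun z => ∑ k ∈ s, f k z) x = ∑ k ∈ s, pd d i (f k) x := by
  simp only [pd, fderiv_fun_sum h, _root_.sum_apply]

theorem pd_mul {f g : (Fin d → ℝ) → ℝ} {x : Fin d → ℝ} (i : Fin d)
    (hf : DifferentiableAt ℝ f x) (hg : DifferentiableAt ℝ g x) :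
    pd d i (fun z => f z * g z) x = pd d i f x * g x + f x * pd d i g x := by
  simp only [pd, fderiv_fun_mul hf hg, _root_.add_apply, _root_.smul_apply, smul_eq_mul]
  ring

theorem fderiv_apply_eq_dotProduct_grad {f : (Fin d → ℝ) → ℝ} (x ξ : Fin d → ℝ) :
    fderiv ℝ f x ξ = ξ ⬝ᵥ grad d f x := by
  conv_lhs => rw [pi_eq_sum_univ' ξ]
  simp [map_sum, dotProduct, grad, pd]

theorem jacMat_comp {φ ψ : (Fin d → ℝ) → Fin d → ℝ} {x : Fin d → ℝ}
    (hφ : DifferentiableAt ℝ φ (ψ x)) (hψ : DifferentiableAt ℝ ψ x) :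
    jacMat d (φ ∘ ψ) x = jacMat d φ (ψ x) * jacMat d ψ x := by
  rw [jacMat, fderiv_comp x hφ hψ]
  exact LinearMap.toMatrix'_comp _ _

theorem jacMat_mul_jacMat_of_leftInverse {φ ψ : (Fin d → ℝ) → Fin d → ℝ} {x : Fin d → ℝ}
    (hφ : DifferentiableAt ℝ φ (ψ x)) (hψ : DifferentiableAt ℝ ψ x)
    (h : Function.LeftInverse φ ψ) :
    jacMat d φ (ψ x) * jacMat d ψ x = 1 := by
  rw [← jacMat_comp hφ hψ, h.comp_eq_id, jacMat, fderiv_id, ContinuousLinearMap.coe_id,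
    LinearMap.toMatrix'_id]

theorem grad_comp {f : (Fin d → ℝ) → ℝ} {G : (Fin d → ℝ) → Fin d → ℝ} {z : Fin d → ℝ}
    (hf : DifferentiableAt ℝ f (G z)) (hG : DifferentiableAt ℝ G z) :
    grad d (fun z' => f (G z')) z = (jacMat d G z)ᵀ *ᵥ grad d f (G z) := by
  funext j
  rw [grad, pd, fderiv_fun_comp z hf hG, ContinuousLinearMap.comp_apply,
    fderiv_apply_eq_dotProduct_grad]
  rfl

theorem contDiff_pd {n : WithTop ℕ∞} {u : (Fin d → ℝ) → ℝ} (hu : ContDiff ℝ (n + 1) u)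
    (i : Fin d) : ContDiff ℝ n (pd d i u) :=
  (ContinuousLinearMap.apply ℝ ℝ (Pi.single i 1 : Fin d → ℝ)).contDiff.comp
    (hu.fderiv_right le_rfl)

noncomputable def entryCLM (d : ℕ) (l j : Fin d) : ((Fin d → ℝ) →L[ℝ] Fin d → ℝ) →L[ℝ] ℝ :=
  (ContinuousLinearMap.proj (R := ℝ) (φ := fun _ : Fin d => ℝ) l).comp
    (ContinuousLinearMap.apply ℝ _ (Pi.single j 1))

theorem contDiff_jacMat_apply {n : WithTop ℕ∞} {G : (Fin d → ℝ) → Fin d → ℝ}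
    (hG : ContDiff ℝ (n + 1) G) (l j : Fin d) : ContDiff ℝ n (fun z => jacMat d G z l j) :=
  (entryCLM d l j).contDiff.comp (hG.fderiv_right le_rfl)

theorem pd_jacMat_apply {G : (Fin d → ℝ) → Fin d → ℝ} {y : Fin d → ℝ}
    (hG : DifferentiableAt ℝ (fderiv ℝ G) y) (i l j : Fin d) :
    pd d i (fun z => jacMat d G z l j) y
      = fderiv ℝ (fderiv ℝ G) y (Pi.single i 1) (Pi.single j 1) l :=
  congrArg (· (Pi.single i 1)) ((entryCLM d l j).hasFDerivAt.comp y hG.hasFDerivAt).fderiv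

theorem pd_jacMat_apply_comm {G : (Fin d → ℝ) → Fin d → ℝ} (hG : ContDiff ℝ 2 G)
    (y : Fin d → ℝ) (i l j : Fin d) :
    pd d i (fun z => jacMat d G z l j) y = pd d j (fun z => jacMat d G z l i) y := by
  have hG' : DifferentiableAt ℝ (fderiv ℝ G) y :=
    (hG.fderiv_right (m := 1) le_rfl).differentiable one_ne_zero y
  rw [pd_jacMat_apply hG', pd_jacMat_apply hG',
    hG.contDiffAt.isSymmSndFDerivAt (by simp) (Pi.single i 1) (Pi.single j 1)]

end Calculus

section Piola

variable {d : ℕ} {G : (Fin d → ℝ) → Fin d → ℝ}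

theorem sum_pd_adjugate_jacMat_eq_zero (hG : ContDiff ℝ 2 G) (y : Fin d → ℝ) (k : Fin d) :
    ∑ i, pd d i (fun z => (jacMat d G z).adjugate i k) y = 0 := by
  set Q := jacMat d G y
  have hJ l j : DifferentiableAt ℝ (fun z => jacMat d G z l j) y :=
    (contDiff_jacMat_apply (n := 1) hG l j).differentiable one_ne_zero y
  -- `adj(Q)_{ik}` is the determinant of `Q` with row `k` replaced by `e_i`; differentiate it
  -- row by row. Row `k` is constant, and row `l ≠ k` contributes `∑ i j, ∂_i∂_j G_l · T_{ij}`
  -- with `T` antisymmetric in `i, j`.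
  have hpd i : pd d i (fun z => (jacMat d G z).adjugate i k) y
      = ∑ l, ((Q.updateRow k (Pi.single i 1)).updateRow l fun j =>
          pd d i (fun z => (jacMat d G z).updateRow k (Pi.single i 1) l j) y).det := by
    simp only [Matrix.adjugate_apply]
    exact fderiv_det_apply (differentiableAt_updateRow_apply hJ k _) _
  rw [Finset.sum_congr rfl fun i _ => hpd i, Finset.sum_comm]
  refine Finset.sum_eq_zero fun l _ => ?_
  rcases eq_or_ne l k with rfl | hlk
  · refine Finset.sum_eq_zero fun i _ => Matrix.det_eq_zero_of_row_eq_zero l fun j => ?_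
    simp [pd]
  · have hrow i : (fun j => pd d i (fun z => (jacMat d G z).updateRow k (Pi.single i 1) l j) y)
        = ∑ j, pd d i (fun z => jacMat d G z l j) y • Pi.single j 1 := by
      simp only [Matrix.updateRow_ne hlk]
      exact pi_eq_sum_univ' _
    simp only [hrow, det_updateRow_sum_smul]
    exact sum_sum_mul_eq_zero_of_symm_of_antisymm
      (fun i j => (pd_jacMat_apply_comm hG y i l j).symm)
      (fun i j => det_updateRow_updateRow_swap Q hlk _ _)

theorem sum_adjugate_mul_pd_comp {f : (Fin d → ℝ) → ℝ} {y : Fin d → ℝ}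
    (hf : DifferentiableAt ℝ f (G y)) (hG : DifferentiableAt ℝ G y) (k : Fin d) :
    ∑ i, (jacMat d G y).adjugate i k * pd d i (fun z => f (G z)) y
      = (jacMat d G y).det * pd d k f (G y) := by
  set Q := jacMat d G y
  calc ∑ i, Q.adjugate i k * pd d i (fun z => f (G z)) y
      = (Q.adjugateᵀ *ᵥ (Qᵀ *ᵥ grad d f (G y))) k := by
        rw [← grad_comp hf hG]
        rfl
  _ = Q.det * pd d k f (G y) := by
        rw [Matrix.mulVec_mulVec, ← Matrix.transpose_mul, Matrix.mul_adjugate,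
          Matrix.transpose_smul, Matrix.transpose_one, Matrix.smul_mulVec, Matrix.one_mulVec]
        rfl

theorem divergence_adjugate_jacMat_mulVec_comp (hG : ContDiff ℝ 2 G)
    {V : (Fin d → ℝ) → Fin d → ℝ} {y : Fin d → ℝ}
    (hV : ∀ k, DifferentiableAt ℝ (fun x => V x k) (G y)) :
    divergence d (fun z => (jacMat d G z).adjugate *ᵥ V (G z)) y
      = (jacMat d G y).det * divergence d V (G y) := by
  have hGd : Differentiable ℝ G := hG.differentiable two_ne_zero
  have hJ l j : DifferentiableAt ℝ (fun z => jacMat d G z l j) y :=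
    (contDiff_jacMat_apply (n := 1) hG l j).differentiable one_ne_zero y
  have hVG k : DifferentiableAt ℝ (fun z => V (G z) k) y := (hV k).comp y (hGd y)
  have hpd i : pd d i (fun z => ((jacMat d G z).adjugate *ᵥ V (G z)) i) y
      = ∑ k, (pd d i (fun z => (jacMat d G z).adjugate i k) y * V (G y) k
        + (jacMat d G y).adjugate i k * pd d i (fun z => V (G z) k) y) := by
    simp only [Matrix.mulVec, dotProduct]
    rw [pd_sum (f := fun k z => (jacMat d G z).adjugate i k * V (G z) k) _ i
      fun k _ => (differentiableAt_adjugate_apply hJ i k).mul (hVG k)]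
    exact Finset.sum_congr rfl fun k _ =>
      pd_mul i (differentiableAt_adjugate_apply hJ i k) (hVG k)
  calc divergence d (fun z => (jacMat d G z).adjugate *ᵥ V (G z)) y
      = ∑ k, (∑ i, pd d i (fun z => (jacMat d G z).adjugate i k) y) * V (G y) k
        + ∑ k, ∑ i, (jacMat d G y).adjugate i k * pd d i (fun z => V (G z) k) y := by
        rw [divergence, Finset.sum_congr rfl fun i _ => hpd i, Finset.sum_comm]
        simp only [Finset.sum_add_distrib, Finset.sum_mul]
  _ = (jacMat d G y).det * divergence d V (G y) := by
        simp only [sum_pd_adjugate_jacMat_eq_zero hG, zero_mul, Finset.sum_const_zero, zero_add,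
          sum_adjugate_mul_pd_comp (hV _) (hGd y), divergence, Finset.mul_sum]

end Piola

theorem pushforward_mulVec_grad_comp {d : ℕ} {F G : (Fin d → ℝ) → Fin d → ℝ}
    {u : (Fin d → ℝ) → ℝ} {z : Fin d → ℝ} (hu : DifferentiableAt ℝ u (G z))
    (hG : DifferentiableAt ℝ G z) (hPQ : jacMat d F (G z) * jacMat d G z = 1)
    (hQP : jacMat d G z * jacMat d F (G z) = 1) (A : Matrix (Fin d) (Fin d) ℝ) :
    ((jacMat d F (G z)).det⁻¹ • (jacMat d F (G z) * A * (jacMat d F (G z))ᵀ))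
        *ᵥ grad d (fun z' => u (G z')) z
      = (jacMat d G z).adjugate *ᵥ (A *ᵥ grad d u (G z)) := by
  rw [grad_comp hu hG, Matrix.mulVec_mulVec,
    inv_det_smul_mul_mul_transpose_mul_transpose hPQ hQP, Matrix.mulVec_mulVec]

theorem change_of_variables_divForm_general (d : ℕ)
    (F G : (Fin d → ℝ) → (Fin d → ℝ))
    (hF : ContDiff ℝ 2 F) (hG : ContDiff ℝ 2 G)
    (hGF : Function.LeftInverse G F) (hFG : Function.RightInverse G F)
    (A : (Fin d → ℝ) → Matrix (Fin d) (Fin d) ℝ)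
    (hA : ∀ i j, ContDiff ℝ 1 (fun x => A x i j))
    (u : (Fin d → ℝ) → ℝ) (hu : ContDiff ℝ 2 u)
    (B : (Fin d → ℝ) → Matrix (Fin d) (Fin d) ℝ)
    (hB : ∀ y, B y = ((jacMat d F (G y)).det)⁻¹ •
      (jacMat d F (G y) * A (G y) * (jacMat d F (G y))ᵀ)) :
    ∀ y, divForm d B (fun z => u (G z)) y =
      ((jacMat d F (G y)).det)⁻¹ * divForm d A u (G y) := by
  intro y
  have hFd : Differentiable ℝ F := hF.differentiable two_ne_zero
  have hGd : Differentiable ℝ G := hG.differentiable two_ne_zero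
  have hPQ z : jacMat d F (G z) * jacMat d G z = 1 :=
    jacMat_mul_jacMat_of_leftInverse (hFd _) (hGd z) hFG
  have hQP z : jacMat d G z * jacMat d F (G z) = 1 := by
    simpa only [hFG z] using jacMat_mul_jacMat_of_leftInverse (hGd _) (hFd (G z)) hGF
  have hflux : (fun z => B z *ᵥ grad d (fun z' => u (G z')) z)
      = fun z => (jacMat d G z).adjugate *ᵥ (fun x => A x *ᵥ grad d u x) (G z) := by
    funext z
    rw [hB z]
    exact pushforward_mulVec_grad_comp (hu.differentiable two_ne_zero _) (hGd z) (hPQ z)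
      (hQP z) _
  have hW k : DifferentiableAt ℝ (fun x => (A x *ᵥ grad d u x) k) (G y) := by
    refine ContDiff.differentiable (n := 1) ?_ one_ne_zero _
    exact ContDiff.sum (s := Finset.univ) fun m _ => (hA k m).mul (contDiff_pd hu m)
  rw [divForm_eq_divergence, hflux, divergence_adjugate_jacMat_mulVec_comp hG hW,
    det_eq_inv_det_of_mul_eq_one (hQP y), divForm_eq_divergence]

/-- Change-of-variables principle for divergence-form operators: with `v = u∘F⁻¹` and the
push-forward conductivity `B = (DF·A·DFᵀ/det DF) ∘ F⁻¹`, one has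
`∇·(B∇v) = (∇·(A∇u)) ∘ F⁻¹ / (det DF ∘ F⁻¹)`. -/
theorem change_of_variables_divForm (d : ℕ)
    (F G : (Fin d → ℝ) → (Fin d → ℝ))
    (hF : ContDiff ℝ 2 F) (hG : ContDiff ℝ 2 G)
    (hGF : Function.LeftInverse G F) (hFG : Function.RightInverse G F)
    (hdet : ∀ x, 0 < (jacMat d F x).det)
    (A : (Fin d → ℝ) → Matrix (Fin d) (Fin d) ℝ)
    (hA : ∀ i j, ContDiff ℝ 1 (fun x => A x i j))
    (u : (Fin d → ℝ) → ℝ) (hu : ContDiff ℝ 2 u)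
    (B : (Fin d → ℝ) → Matrix (Fin d) (Fin d) ℝ)
    (hB : ∀ y, B y = ((jacMat d F (G y)).det)⁻¹ •
      (jacMat d F (G y) * A (G y) * (jacMat d F (G y))ᵀ)) :
    ∀ y, divForm d B (fun z => u (G z)) y =
      ((jacMat d F (G y)).det)⁻¹ * divForm d A u (G y) :=
  change_of_variables_divForm_general d F G hF hG hGF hFG A hA u hu B hB
end
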